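/- arXiv:2509.03065 — 3 statements merged into one kernel-verified Lean document; each statement's English description precedes it below -/
import Mathlib

section
/- Let (X_n) and (Y_n) be sequences of real-valued random variables in L^4 with, for every n: E[X_n] = 0, E[Y_n] = 0, E[X_nY_n] = 0, E[(X_n + Y_n)²] = 1, κ₄(X_n) ≥ 0, κ₄(Y_n) ≥ 0 and Cov(X_n², Y_n²) ≥ 0. If E[X_n³Y_n] → 0, E[X_nY_n³] → 0 and E[(X_n + Y_n)⁴] → 3 as n → ∞, then κ₄(X_n) → 0, κ₄(Y_n) → 0 and Cov(X_n², Y_n²) → 0. -/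
open MeasureTheory Filter
open scoped ENNReal

/-!
Expanding `E[(X + Y)⁴]` binomially and using `E[X²] + E[Y²] = E[(X + Y)²] = 1` (orthogonality)
gives the identity `κ₄(X) + κ₄(Y) + 6 Cov(X², Y²) = E[(X + Y)⁴] - 4 E[X³Y] - 4 E[XY³] - 3`,
whose right-hand side tends to `0` by hypothesis. A sum of three nonnegative sequences tending
to `0` forces each of them to `0`.
-/

instance ENNReal.holderTriple_four_four_two : ENNReal.HolderTriple 4 4 2 where
  inv_add_inv_eq_inv := by
    rw [← two_mul, show (4 : ℝ≥0∞) = 2 * 2 by norm_num, ENNReal.mul_inv (by simp) (by simp),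
      ← mul_assoc, ENNReal.mul_inv_cancel (by simp) (by simp), one_mul]

namespace MeasureTheory

variable {Ω : Type*} [MeasurableSpace Ω] {μ : Measure Ω}

noncomputable def fourthCumulant (μ : Measure Ω) (W : Ω → ℝ) : ℝ :=
  (∫ ω, W ω ^ 4 ∂μ) - 3 * (∫ ω, W ω ^ 2 ∂μ) ^ 2

/-- `covSq μ U V` is `Cov(U², V²)`. -/
noncomputable def covSq (μ : Measure Ω) (U V : Ω → ℝ) : ℝ :=
  (∫ ω, U ω ^ 2 * V ω ^ 2 ∂μ) - (∫ ω, U ω ^ 2 ∂μ) * (∫ ω, V ω ^ 2 ∂μ)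

theorem MemLp.integrable_mul_mul_mul {f₁ f₂ f₃ f₄ : Ω → ℝ} (h₁ : MemLp f₁ 4 μ)
    (h₂ : MemLp f₂ 4 μ) (h₃ : MemLp f₃ 4 μ) (h₄ : MemLp f₄ 4 μ) :
    Integrable (fun ω => f₁ ω * f₂ ω * f₃ ω * f₄ ω) μ := by
  have h := (h₂.mul h₁ : MemLp (f₁ * f₂) 2 μ).integrable_mul (h₄.mul h₃ : MemLp (f₃ * f₄) 2 μ)
  exact h.congr (ae_of_all _ fun ω => by simp only [Pi.mul_apply]; ring)

variable {f g : Ω → ℝ}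

theorem integral_add_sq (hf : MemLp f 2 μ) (hg : MemLp g 2 μ) :
    ∫ ω, (f ω + g ω) ^ 2 ∂μ
      = (∫ ω, f ω ^ 2 ∂μ) + 2 * (∫ ω, f ω * g ω ∂μ) + ∫ ω, g ω ^ 2 ∂μ := by
  have hff : Integrable (fun ω => f ω ^ 2) μ := by
    simpa [sq, Pi.mul_def] using hf.integrable_mul hf
  have hfg : Integrable (fun ω => f ω * g ω) μ := hf.integrable_mul hg
  have hgg : Integrable (fun ω => g ω ^ 2) μ := by
    simpa [sq, Pi.mul_def] using hg.integrable_mul hg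
  simp only [add_sq, mul_assoc]
  rw [integral_add (by fun_prop) hgg, integral_add hff (hfg.const_mul 2), integral_const_mul]

theorem integral_add_pow_four (hf : MemLp f 4 μ) (hg : MemLp g 4 μ) :
    ∫ ω, (f ω + g ω) ^ 4 ∂μ
      = (∫ ω, f ω ^ 4 ∂μ) + 4 * (∫ ω, f ω ^ 3 * g ω ∂μ) + 6 * (∫ ω, f ω ^ 2 * g ω ^ 2 ∂μ)
        + 4 * (∫ ω, f ω * g ω ^ 3 ∂μ) + ∫ ω, g ω ^ 4 ∂μ := by
  have monomial {a b c d : Ω → ℝ} (ha : MemLp a 4 μ) (hb : MemLp b 4 μ) (hc : MemLp c 4 μ)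
      (hd : MemLp d 4 μ) {F : Ω → ℝ} (hF : ∀ ω, F ω = a ω * b ω * c ω * d ω) :
      Integrable F μ :=
    (ha.integrable_mul_mul_mul hb hc hd).congr (ae_of_all _ fun ω => (hF ω).symm)
  have h₀ := monomial hf hf hf hf (F := fun ω => f ω ^ 4) fun ω => by ring
  have h₁ := monomial hf hf hf hg (F := fun ω => f ω ^ 3 * g ω) fun ω => by ring
  have h₂ := monomial hf hf hg hg (F := fun ω => f ω ^ 2 * g ω ^ 2) fun ω => by ring
  have h₃ := monomial hf hg hg hg (F := fun ω => f ω * g ω ^ 3) fun ω => by ring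
  have h₄ := monomial hg hg hg hg (F := fun ω => g ω ^ 4) fun ω => by ring
  have expand : ∀ ω, (f ω + g ω) ^ 4 = f ω ^ 4 + 4 * (f ω ^ 3 * g ω) + 6 * (f ω ^ 2 * g ω ^ 2)
      + 4 * (f ω * g ω ^ 3) + g ω ^ 4 := fun ω => by ring
  simp only [expand]
  rw [integral_add (by fun_prop) h₄, integral_add (by fun_prop) (h₃.const_mul 4),
    integral_add (by fun_prop) (h₂.const_mul 6), integral_add h₀ (h₁.const_mul 4),
    integral_const_mul, integral_const_mul, integral_const_mul]

theorem fourthCumulant_add_fourthCumulant_add_six_mul_covSq [IsFiniteMeasure μ] (hf : MemLp f 4 μ)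
    (hg : MemLp g 4 μ) (horth : ∫ ω, f ω * g ω ∂μ = 0) (hvar : ∫ ω, (f ω + g ω) ^ 2 ∂μ = 1) :
    fourthCumulant μ f + fourthCumulant μ g + 6 * covSq μ f g
      = (∫ ω, (f ω + g ω) ^ 4 ∂μ) - 4 * (∫ ω, f ω ^ 3 * g ω ∂μ)
        - 4 * (∫ ω, f ω * g ω ^ 3 ∂μ) - 3 := by
  have hsq : (∫ ω, f ω ^ 2 ∂μ) + ∫ ω, g ω ^ 2 ∂μ = 1 := by
    rw [← hvar, integral_add_sq (hf.mono_exponent (by norm_num)) (hg.mono_exponent (by norm_num)),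
      horth]
    ring
  rw [integral_add_pow_four hf hg, fourthCumulant, fourthCumulant, covSq]
  linear_combination -3 * ((∫ ω, f ω ^ 2 ∂μ) + (∫ ω, g ω ^ 2 ∂μ) + 1) * hsq

end MeasureTheory

theorem fourth_moment_sum_forces_vanishing_general
    {Ω : Type*} [MeasurableSpace Ω] (μ : Measure Ω) [IsProbabilityMeasure μ]
    (X Y : ℕ → Ω → ℝ)
    (hX : ∀ n, MemLp (X n) 4 μ) (hY : ∀ n, MemLp (Y n) 4 μ)
    (hEXY : ∀ n, ∫ ω, X n ω * Y n ω ∂μ = 0)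
    (hvar : ∀ n, ∫ ω, (X n ω + Y n ω) ^ 2 ∂μ = 1)
    (hκX : ∀ n, 0 ≤ (∫ ω, X n ω ^ 4 ∂μ) - 3 * (∫ ω, X n ω ^ 2 ∂μ) ^ 2)
    (hκY : ∀ n, 0 ≤ (∫ ω, Y n ω ^ 4 ∂μ) - 3 * (∫ ω, Y n ω ^ 2 ∂μ) ^ 2)
    (hCov : ∀ n, 0 ≤ (∫ ω, X n ω ^ 2 * Y n ω ^ 2 ∂μ)
        - (∫ ω, X n ω ^ 2 ∂μ) * (∫ ω, Y n ω ^ 2 ∂μ))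
    (hX3Y : Tendsto (fun n => ∫ ω, X n ω ^ 3 * Y n ω ∂μ) atTop (nhds 0))
    (hXY3 : Tendsto (fun n => ∫ ω, X n ω * Y n ω ^ 3 ∂μ) atTop (nhds 0))
    (hZ4 : Tendsto (fun n => ∫ ω, (X n ω + Y n ω) ^ 4 ∂μ) atTop (nhds 3)) :
    Tendsto (fun n => (∫ ω, X n ω ^ 4 ∂μ) - 3 * (∫ ω, X n ω ^ 2 ∂μ) ^ 2)
        atTop (nhds 0)
    ∧ Tendsto (fun n => (∫ ω, Y n ω ^ 4 ∂μ) - 3 * (∫ ω, Y n ω ^ 2 ∂μ) ^ 2)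
        atTop (nhds 0)
    ∧ Tendsto (fun n => (∫ ω, X n ω ^ 2 * Y n ω ^ 2 ∂μ)
        - (∫ ω, X n ω ^ 2 ∂μ) * (∫ ω, Y n ω ^ 2 ∂μ)) atTop (nhds 0) := by
  have hsum : Tendsto (fun n => fourthCumulant μ (X n) + fourthCumulant μ (Y n)
      + 6 * covSq μ (X n) (Y n)) atTop (nhds 0) := by
    have hlim := ((hZ4.sub (hX3Y.const_mul 4)).sub (hXY3.const_mul 4)).sub_const 3
    norm_num at hlim
    refine hlim.congr fun n => ?_
    exact (fourthCumulant_add_fourthCumulant_add_six_mul_covSq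
      (hX n) (hY n) (hEXY n) (hvar n)).symm
  refine ⟨squeeze_zero hκX (fun n => ?_) hsum, squeeze_zero hκY (fun n => ?_) hsum,
    squeeze_zero hCov (fun n => ?_) hsum⟩ <;>
  · have := hκX n; have := hκY n; have := hCov n
    simp only [fourthCumulant, covSq]
    linarith

/-- For sequences `(Xₙ), (Yₙ)` in `L⁴` that are centered, orthogonal, with
`E[(Xₙ+Yₙ)²] = 1`, nonnegative fourth cumulants and nonnegative covariance of
squares, if `E[Xₙ³Yₙ] → 0`, `E[XₙYₙ³] → 0` and `E[(Xₙ+Yₙ)⁴] → 3`, then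
`κ₄(Xₙ) → 0`, `κ₄(Yₙ) → 0` and `Cov(Xₙ², Yₙ²) → 0`, where
`κ₄(W) = E[W⁴] - 3 (E[W²])²` and `Cov(U², V²) = E[U²V²] - E[U²] E[V²]`. -/
theorem fourth_moment_sum_forces_vanishing
    {Ω : Type*} [MeasurableSpace Ω] (μ : Measure Ω) [IsProbabilityMeasure μ]
    (X Y : ℕ → Ω → ℝ)
    (hX : ∀ n, MemLp (X n) 4 μ) (hY : ∀ n, MemLp (Y n) 4 μ)
    (hEX : ∀ n, ∫ ω, X n ω ∂μ = 0) (hEY : ∀ n, ∫ ω, Y n ω ∂μ = 0)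
    (hEXY : ∀ n, ∫ ω, X n ω * Y n ω ∂μ = 0)
    (hvar : ∀ n, ∫ ω, (X n ω + Y n ω) ^ 2 ∂μ = 1)
    (hκX : ∀ n, 0 ≤ (∫ ω, X n ω ^ 4 ∂μ) - 3 * (∫ ω, X n ω ^ 2 ∂μ) ^ 2)
    (hκY : ∀ n, 0 ≤ (∫ ω, Y n ω ^ 4 ∂μ) - 3 * (∫ ω, Y n ω ^ 2 ∂μ) ^ 2)
    (hCov : ∀ n, 0 ≤ (∫ ω, X n ω ^ 2 * Y n ω ^ 2 ∂μ)
        - (∫ ω, X n ω ^ 2 ∂μ) * (∫ ω, Y n ω ^ 2 ∂μ))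
    (hX3Y : Tendsto (fun n => ∫ ω, X n ω ^ 3 * Y n ω ∂μ) atTop (nhds 0))
    (hXY3 : Tendsto (fun n => ∫ ω, X n ω * Y n ω ^ 3 ∂μ) atTop (nhds 0))
    (hZ4 : Tendsto (fun n => ∫ ω, (X n ω + Y n ω) ^ 4 ∂μ) atTop (nhds 3)) :
    Tendsto (fun n => (∫ ω, X n ω ^ 4 ∂μ) - 3 * (∫ ω, X n ω ^ 2 ∂μ) ^ 2)
        atTop (nhds 0)
    ∧ Tendsto (fun n => (∫ ω, Y n ω ^ 4 ∂μ) - 3 * (∫ ω, Y n ω ^ 2 ∂μ) ^ 2)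
        atTop (nhds 0)
    ∧ Tendsto (fun n => (∫ ω, X n ω ^ 2 * Y n ω ^ 2 ∂μ)
        - (∫ ω, X n ω ^ 2 ∂μ) * (∫ ω, Y n ω ^ 2 ∂μ)) atTop (nhds 0) :=
  fourth_moment_sum_forces_vanishing_general μ X Y hX hY hEXY hvar hκX hκY hCov hX3Y hXY3 hZ4
end

section
/- Let N be a random variable with the Poisson distribution of mean 1, and set U = N − 1 and V = (N − 1)² − N. Then for every real number α, E[(U + αV)³] = 1 + 6α + 12α² + 12α³. -/
/-!
The law of `N` is `Po(1)`, whose factorial moments `E[N (N - 1) ⋯ (N - m + 1)]` all equal `1`.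
Expanding `(U + αV)³`, a polynomial of degree six in `N`, in the falling-factorial basis, its
expectation is therefore the sum of the coefficients of that expansion.
-/

open MeasureTheory ProbabilityTheory Real
open scoped NNReal Nat

lemma Nat.cast_descFactorial_add_div_factorial {K : Type*} [Field K] [CharZero K] (j m : ℕ) :
    ((j + m).descFactorial m : K) / (j + m)! = 1 / j ! := by
  have h := Nat.factorial_mul_descFactorial (Nat.le_add_left m j)
  rw [Nat.add_sub_cancel] at h
  rw [div_eq_div_iff (Nat.cast_ne_zero.2 (Nat.factorial_ne_zero _))
    (Nat.cast_ne_zero.2 (Nat.factorial_ne_zero _)), ← h]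
  push_cast
  ring

namespace ProbabilityTheory

lemma hasSum_poissonMeasure_mul_descFactorial (r : ℝ≥0) (m : ℕ) :
    HasSum (fun n ↦ exp (-r) * r ^ n / n ! * n.descFactorial m) ((r : ℝ) ^ m) := by
  rw [← hasSum_nat_add_iff' m, Finset.sum_eq_zero fun n hn ↦ by
    simp [Nat.descFactorial_of_lt (Finset.mem_range.mp hn)], sub_zero]
  have hterm (j : ℕ) : exp (-r) * r ^ (j + m) / (j + m)! * (j + m).descFactorial m =
      r ^ m * (exp (-r) * r ^ j / j !) :=
    calc exp (-r) * r ^ (j + m) / (j + m)! * (j + m).descFactorial m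
        = r ^ m * (exp (-r) * r ^ j) * (((j + m).descFactorial m : ℝ) / (j + m)!) := by ring
      _ = r ^ m * (exp (-r) * r ^ j / j !) := by
        rw [Nat.cast_descFactorial_add_div_factorial]; ring
  simpa only [hterm, mul_one] using (hasSum_one_poissonMeasure r).mul_left ((r : ℝ) ^ m)

lemma integrable_descFactorial_poissonMeasure (r : ℝ≥0) (m : ℕ) :
    Integrable (fun n : ℕ ↦ (n.descFactorial m : ℝ)) Po(r) := by
  rw [integrable_poissonMeasure_iff]
  simpa using (hasSum_poissonMeasure_mul_descFactorial r m).summable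

lemma integral_descFactorial_poissonMeasure (r : ℝ≥0) (m : ℕ) :
    ∫ n : ℕ, (n.descFactorial m : ℝ) ∂Po(r) = (r : ℝ) ^ m := by
  rw [integral_poissonMeasure]
  exact (hasSum_poissonMeasure_mul_descFactorial r m).tsum_eq

lemma integral_sum_mul_descFactorial_poissonMeasure {d : ℕ} (c : Fin d → ℝ) (r : ℝ≥0) :
    ∫ n : ℕ, ∑ m : Fin d, c m * (n.descFactorial m : ℝ) ∂Po(r) = ∑ m : Fin d, c m * r ^ (m : ℕ) := by
  rw [integral_finsetSum _ fun (m : Fin d) _ ↦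
    (integrable_descFactorial_poissonMeasure r m).const_mul (c m)]
  simp only [integral_const_mul, integral_descFactorial_poissonMeasure]

lemma hasLaw_poissonMeasure_of_measure_eq {Ω : Type*} [MeasurableSpace Ω] {μ : Measure Ω} {N : Ω → ℕ}
    (hN : Measurable N) (r : ℝ≥0)
    (hlaw : ∀ k : ℕ, μ {ω | N ω = k} = ENNReal.ofReal (exp (-r) * r ^ k / k !)) :
    HasLaw N Po(r) μ where
  aemeasurable := hN.aemeasurable
  map_eq := Measure.ext_of_singleton fun k ↦ by
    rw [Measure.map_apply hN (measurableSet_singleton k), poissonMeasure_singleton]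
    exact hlaw k

end ProbabilityTheory

lemma cube_eq_sum_descFactorial (α : ℝ) (k : ℕ) :
    ((k : ℝ) - 1 + α * (((k : ℝ) - 1) ^ 2 - k)) ^ 3 =
      ∑ m : Fin 7, ![α ^ 3 - 3 * α ^ 2 + 3 * α - 1, -2 * α ^ 3 + 3 * α ^ 2 - 3 * α + 1, α ^ 3,
        3 * α + 1, 5 * α ^ 3 + 9 * α ^ 2 + 3 * α, 6 * α ^ 3 + 3 * α ^ 2, α ^ 3] m *
        (k.descFactorial m : ℝ) := by
  simp only [Fin.sum_univ_succ, Fin.sum_univ_zero, Matrix.cons_val_zero, Matrix.cons_val_succ,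
    Fin.val_zero, Fin.val_succ, ← descPochhammer_eval_eq_descFactorial, descPochhammer_succ_eval,
    descPochhammer_zero, Polynomial.eval_one]
  push_cast
  ring

theorem poisson_combination_third_moment_general
    {Ω : Type*} [MeasurableSpace Ω] (μ : Measure Ω)
    (N : Ω → ℕ) (hN : Measurable N)
    (hlaw : ∀ k : ℕ, μ {ω | N ω = k} = ENNReal.ofReal (Real.exp (-1) / k.factorial))
    (U V : Ω → ℝ) (hU : U = fun ω => (N ω : ℝ) - 1)
    (hV : V = fun ω => ((N ω : ℝ) - 1) ^ 2 - N ω) (α : ℝ) :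
    (∫ ω, (U ω + α * V ω) ^ 3 ∂μ) = 1 + 6 * α + 12 * α ^ 2 + 12 * α ^ 3 := by
  subst hU hV
  have hPo : HasLaw N Po(1) μ := hasLaw_poissonMeasure_of_measure_eq hN 1 (by simpa using hlaw)
  calc ∫ ω, ((N ω : ℝ) - 1 + α * (((N ω : ℝ) - 1) ^ 2 - N ω)) ^ 3 ∂μ
      = ∫ k : ℕ, ((k : ℝ) - 1 + α * (((k : ℝ) - 1) ^ 2 - k)) ^ 3 ∂Po(1) := by
        rw [← hPo.integral_comp .of_discrete]; rfl
    _ = 1 + 6 * α + 12 * α ^ 2 + 12 * α ^ 3 := by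
      simp_rw [cube_eq_sum_descFactorial, integral_sum_mul_descFactorial_poissonMeasure]
      simp only [Fin.sum_univ_succ, Fin.sum_univ_zero, Matrix.cons_val_zero, Matrix.cons_val_succ,
        NNReal.coe_one, one_pow, mul_one]
      ring

/-- If `N ∼ Poisson(1)`, `U = N − 1` and `V = (N − 1)² − N`, then for every
real `α`, `E[(U + αV)³] = 1 + 6α + 12α² + 12α³`. -/
theorem poisson_combination_third_moment
    {Ω : Type*} [MeasurableSpace Ω] (μ : Measure Ω) [IsProbabilityMeasure μ]
    (N : Ω → ℕ) (hN : Measurable N)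
    (hlaw : ∀ k : ℕ, μ {ω | N ω = k} = ENNReal.ofReal (Real.exp (-1) / k.factorial))
    (U V : Ω → ℝ) (hU : U = fun ω => (N ω : ℝ) - 1)
    (hV : V = fun ω => ((N ω : ℝ) - 1) ^ 2 - N ω) (α : ℝ) :
    (∫ ω, (U ω + α * V ω) ^ 3 ∂μ) = 1 + 6 * α + 12 * α ^ 2 + 12 * α ^ 3 :=
  poisson_combination_third_moment_general μ N hN hlaw U V hU hV α
end

section
/- Let N be a random variable with the Poisson distribution of mean 1, set U = N − 1 and V = (N − 1)² − N. Then there exists a real number α* such that the normalized random variable S = (U + α*V)/√(1 + 2α*²) satisfies E[S²] = 1 and E[S⁴] = 3, while the law of S is not the standard Gaussian distribution N(0,1) on ℝ. -/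
/-!
`U = N - 1` and `V = (N - 1)² - N` are the first two Charlier polynomials of `N ∼ Poisson(1)`,
so they are orthogonal and `E[(U + αV)²] = 1 + 2α²`. The fourth moment `E[(U + αV)⁴]` is a
quartic in `α`, computed from the moments of `Poisson(1)`, which are the Bell numbers by Stein's
identity; it equals `3(1 + 2α²)²` for some `α ∈ [-1/10, 0]` by the intermediate value theorem.
Yet `S` is a function of the integer-valued `N`, so its law has atoms and is not Gaussian.
-/

open MeasureTheory ProbabilityTheory Finset
open scoped ENNReal Nat

/-- Stein's identity `E[N f(N)] = r E[f(N + 1)]` for `N ∼ Poisson(r)`, at the level of series. -/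
lemma HasSum.natCast_mul_poisson {r : ℝ} {f : ℕ → ℝ} {s : ℝ}
    (h : HasSum (fun m => f (m + 1) * (Real.exp (-r) * r ^ m / m !)) s) :
    HasSum (fun k => k * f k * (Real.exp (-r) * r ^ k / k !)) (r * s) := by
  have hterm (m : ℕ) : ((m : ℝ) + 1) * f (m + 1) * (Real.exp (-r) * r ^ (m + 1) / (m + 1)!) =
      r * (f (m + 1) * (Real.exp (-r) * r ^ m / m !)) := by
    rw [Nat.factorial_succ]
    push_cast
    field_simp
    ring
  rw [← hasSum_nat_add_iff' 1]
  simpa [hterm] using h.mul_left r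

lemma hasSum_pow_mul_poisson_one (n : ℕ) :
    HasSum (fun k : ℕ => (k : ℝ) ^ n * (Real.exp (-1) / k !)) (Nat.bell n) := by
  induction n using Nat.strong_induction_on with
  | _ n ih =>
  rcases n with _ | n
  · simpa using hasSum_one_poissonMeasure 1
  have shifted : HasSum (fun m : ℕ => ((m + 1 : ℕ) : ℝ) ^ n * (Real.exp (-1) * 1 ^ m / m !))
      (∑ i ∈ range (n + 1), (n.choose i : ℝ) * Nat.bell (n - i)) := by
    simp_rw [Nat.cast_succ, add_comm _ (1 : ℝ), add_pow, one_pow, one_mul, sum_mul]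
    refine hasSum_sum fun i hi => ?_
    simpa [mul_comm, mul_left_comm, mul_assoc] using
      (ih (n - i) (by simp at hi; omega)).mul_left (n.choose i : ℝ)
  have := HasSum.natCast_mul_poisson (f := fun k : ℕ => (k : ℝ) ^ n) shifted
  rw [Nat.bell_succ, ← Nat.range_succ_eq_Iic]
  push_cast
  simpa [pow_succ'] using this

lemma hasSum_polynomial_mul_poisson_one {n : ℕ} (c : Fin n → ℝ) :
    HasSum (fun k : ℕ => (∑ i, c i * (k : ℝ) ^ (i : ℕ)) * (Real.exp (-1) / k !))
      (∑ i, c i * Nat.bell i) := by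
  simp_rw [sum_mul, mul_assoc]
  exact hasSum_sum fun i _ => (hasSum_pow_mul_poisson_one i).mul_left (c i)

/-- `U + α V` as a function of `N = x`: `x - 1` and `(x - 1) ^ 2 - x` are the Charlier
polynomials of degrees one and two for `Poisson(1)`. -/
def charlierComb (α x : ℝ) : ℝ := x - 1 + α * ((x - 1) ^ 2 - x)

lemma Nat.bell_three_to_eight : Nat.bell 3 = 5 ∧ Nat.bell 4 = 15 ∧ Nat.bell 5 = 52 ∧
    Nat.bell 6 = 203 ∧ Nat.bell 7 = 877 ∧ Nat.bell 8 = 4140 := by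
  simp [Nat.bell_succ, ← Nat.range_succ_eq_Iic, sum_range_succ, Nat.choose]

lemma hasSum_charlierComb_sq_mul_poisson_one (α : ℝ) :
    HasSum (fun k : ℕ => charlierComb α k ^ 2 * (Real.exp (-1) / k !)) (1 + 2 * α ^ 2) := by
  obtain ⟨h3, h4, -⟩ := Nat.bell_three_to_eight
  convert hasSum_polynomial_mul_poisson_one ![1 - 2 * α + α ^ 2, -2 + 8 * α - 6 * α ^ 2,
    1 - 8 * α + 11 * α ^ 2, 2 * α - 6 * α ^ 2, α ^ 2] using 2 with k
  all_goals simp only [charlierComb, Fin.sum_univ_succ, Fin.sum_univ_zero, Matrix.cons_val_zero,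
    Matrix.cons_val_succ, Fin.val_zero, Fin.val_succ, Nat.reduceAdd, Nat.bell_zero, Nat.bell_one,
    Nat.bell_two, h3, h4, Nat.cast_ofNat, Nat.cast_one]
  all_goals ring

lemma hasSum_charlierComb_pow_four_mul_poisson_one (α : ℝ) :
    HasSum (fun k : ℕ => charlierComb α k ^ 4 * (Real.exp (-1) / k !))
      (4 + 24 * α + 108 * α ^ 2 + 224 * α ^ 3 + 212 * α ^ 4) := by
  obtain ⟨h3, h4, h5, h6, h7, h8⟩ := Nat.bell_three_to_eight
  convert hasSum_polynomial_mul_poisson_one ![1 - 4 * α + 6 * α ^ 2 - 4 * α ^ 3 + α ^ 4,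
    -4 + 24 * α - 48 * α ^ 2 + 40 * α ^ 3 - 12 * α ^ 4,
    6 - 52 * α + 144 * α ^ 2 - 156 * α ^ 3 + 58 * α ^ 4,
    -4 + 52 * α - 204 * α ^ 2 + 300 * α ^ 3 - 144 * α ^ 4,
    1 - 24 * α + 144 * α ^ 2 - 300 * α ^ 3 + 195 * α ^ 4,
    4 * α - 48 * α ^ 2 + 156 * α ^ 3 - 144 * α ^ 4,
    6 * α ^ 2 - 40 * α ^ 3 + 58 * α ^ 4, 4 * α ^ 3 - 12 * α ^ 4, α ^ 4] using 2 with k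
  all_goals simp only [charlierComb, Fin.sum_univ_succ, Fin.sum_univ_zero, Matrix.cons_val_zero,
    Matrix.cons_val_succ, Fin.val_zero, Fin.val_succ, Nat.reduceAdd, Nat.bell_zero, Nat.bell_one,
    Nat.bell_two, h3, h4, h5, h6, h7, h8, Nat.cast_ofNat, Nat.cast_one]
  all_goals ring

/-- `1 + 24 α + 96 α² + 224 α³ + 200 α⁴` is `1` at `α = 0` and negative at `α = -1/10`. -/
lemma exists_kurtosis_eq_three :
    ∃ α : ℝ, 4 + 24 * α + 108 * α ^ 2 + 224 * α ^ 3 + 212 * α ^ 4 = 3 * (1 + 2 * α ^ 2) ^ 2 := by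
  have hcont : Continuous fun α : ℝ => 1 + 24 * α + 96 * α ^ 2 + 224 * α ^ 3 + 200 * α ^ 4 := by
    fun_prop
  obtain ⟨α, -, hα⟩ := intermediate_value_Icc (by norm_num : (-1 / 10 : ℝ) ≤ 0)
    hcont.continuousOn (by norm_num : (0 : ℝ) ∈ Set.Icc _ _)
  exact ⟨α, by linear_combination hα⟩

lemma map_eq_poissonMeasure_one {Ω : Type*} [MeasurableSpace Ω] {μ : Measure Ω} {N : Ω → ℕ}
    (hN : Measurable N)
    (hlaw : ∀ k : ℕ, μ {ω | N ω = k} = ENNReal.ofReal (Real.exp (-1) / k !)) :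
    μ.map N = poissonMeasure 1 := by
  refine Measure.ext_of_singleton fun k => ?_
  rw [Measure.map_apply hN (measurableSet_singleton k), poissonMeasure_singleton]
  exact (hlaw k).trans (by simp)

lemma integral_comp_eq_of_map_eq_poissonMeasure_one {Ω : Type*} [MeasurableSpace Ω]
    {μ : Measure Ω} {N : Ω → ℕ} (hN : Measurable N) (hmap : μ.map N = poissonMeasure 1)
    {f : ℕ → ℝ} {s : ℝ} (hf : HasSum (fun k => f k * (Real.exp (-1) / k !)) s) :
    ∫ ω, f (N ω) ∂μ = s := by
  rw [← integral_map hN.aemeasurable .of_discrete, hmap, integral_poissonMeasure, ← hf.tsum_eq]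
  simp [mul_comm]

lemma MeasureTheory.Measure.map_ne_of_measure_preimage_singleton_ne_zero {Ω α : Type*}
    [MeasurableSpace Ω] [MeasurableSpace α] [MeasurableSingletonClass α] {μ : Measure Ω}
    {X : Ω → α} (hX : Measurable X) {t : α} (ht : μ (X ⁻¹' {t}) ≠ 0) (ν : Measure α)
    [NullSingletonClass ν] : μ.map X ≠ ν := by
  intro h
  rw [← Measure.map_apply hX (measurableSet_singleton t), h, measure_singleton] at ht
  exact ht rfl

theorem poisson_counterexample_not_gaussian_general
    {Ω : Type*} [MeasurableSpace Ω] (μ : Measure Ω)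
    (N : Ω → ℕ) (hN : Measurable N)
    (hlaw : ∀ k : ℕ, μ {ω | N ω = k} = ENNReal.ofReal (Real.exp (-1) / k.factorial))
    (U V : Ω → ℝ) (hU : U = fun ω => (N ω : ℝ) - 1)
    (hV : V = fun ω => ((N ω : ℝ) - 1) ^ 2 - N ω) :
    ∃ α : ℝ, ∀ S : Ω → ℝ,
      S = (fun ω => (U ω + α * V ω) / Real.sqrt (1 + 2 * α ^ 2)) →
        (∫ ω, S ω ^ 2 ∂μ) = 1 ∧ (∫ ω, S ω ^ 4 ∂μ) = 3
        ∧ Measure.map S μ ≠ gaussianReal 0 1 := by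
  obtain ⟨α, hα⟩ := exists_kurtosis_eq_three
  refine ⟨α, fun S hS => ?_⟩
  obtain rfl : S = fun ω => charlierComb α (N ω) / Real.sqrt (1 + 2 * α ^ 2) := by
    subst hU hV; exact hS
  have hpos : (0 : ℝ) < 1 + 2 * α ^ 2 := by positivity
  have hsq : Real.sqrt (1 + 2 * α ^ 2) ^ 2 = 1 + 2 * α ^ 2 := Real.sq_sqrt hpos.le
  have hsq4 : Real.sqrt (1 + 2 * α ^ 2) ^ 4 = (1 + 2 * α ^ 2) ^ 2 := by
    rw [show 4 = 2 * 2 from rfl, pow_mul, hsq]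
  have hmap := map_eq_poissonMeasure_one hN hlaw
  simp_rw [div_pow, integral_div]
  refine ⟨?_, ?_, ?_⟩
  · rw [integral_comp_eq_of_map_eq_poissonMeasure_one hN hmap
      (hasSum_charlierComb_sq_mul_poisson_one α), hsq, div_self hpos.ne']
  · rw [integral_comp_eq_of_map_eq_poissonMeasure_one hN hmap
      (hasSum_charlierComb_pow_four_mul_poisson_one α), hsq4, hα]
    field_simp
  · have : NullSingletonClass (gaussianReal 0 1) := nullSingletonClass_gaussianReal one_ne_zero
    refine Measure.map_ne_of_measure_preimage_singleton_ne_zero (by unfold charlierComb; fun_prop)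
      (t := charlierComb α 1 / Real.sqrt (1 + 2 * α ^ 2)) (ne_of_gt ?_) _
    calc (0 : ℝ≥0∞) < μ {ω | N ω = 1} := by rw [hlaw]; simp [Real.exp_pos]
      _ ≤ _ := measure_mono fun ω (hω : N ω = 1) => by simp [hω]

/-- If `N ∼ Poisson(1)`, `U = N − 1` and `V = (N − 1)² − N`, then there is a
real `α*` such that `S = (U + α*V)/√(1 + 2α*²)` satisfies `E[S²] = 1` and
`E[S⁴] = 3`, while the law of `S` is not the standard Gaussian `N(0,1)`. -/
theorem poisson_counterexample_not_gaussian
    {Ω : Type*} [MeasurableSpace Ω] (μ : Measure Ω) [IsProbabilityMeasure μ]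
    (N : Ω → ℕ) (hN : Measurable N)
    (hlaw : ∀ k : ℕ, μ {ω | N ω = k} = ENNReal.ofReal (Real.exp (-1) / k.factorial))
    (U V : Ω → ℝ) (hU : U = fun ω => (N ω : ℝ) - 1)
    (hV : V = fun ω => ((N ω : ℝ) - 1) ^ 2 - N ω) :
    ∃ α : ℝ, ∀ S : Ω → ℝ,
      S = (fun ω => (U ω + α * V ω) / Real.sqrt (1 + 2 * α ^ 2)) →
        (∫ ω, S ω ^ 2 ∂μ) = 1 ∧ (∫ ω, S ω ^ 4 ∂μ) = 3
        ∧ Measure.map S μ ≠ gaussianReal 0 1 :=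
  poisson_counterexample_not_gaussian_general μ N hN hlaw U V hU hV
end
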